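/- For every positive integer n, the flip map f is a bijection from 𝒟_n to ℰ_n, where f(D) = (f_{v_1} ∘ ⋯ ∘ f_{v_k})(D) and {v_1,...,v_k} is the set of right improper vertices of D. -/

import Mathlib

/-- Labeled bicolored binary trees: each vertex carries a label and a color
(`true` = black, `false` = white), and has a left and a right (possibly empty) subtree. -/
inductive CBT : Type
  | nil : CBT
  | node (label : ℕ) (black : Bool) (l r : CBT) : CBT
deriving DecidableEq

/-- The multiset of labels of a bicolored binary tree. -/
def CBT.labels : CBT → Multiset ℕ
  | .nil => 0
  | .node a _ l r => a ::ₘ (l.labels + r.labels)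

/-- The smallest label of a bicolored binary tree (`⊤` for the empty tree). -/
noncomputable def CBT.minL : CBT → ℕ∞
  | .nil => ⊤
  | .node a _ l r => min (a : ℕ∞) (min l.minL r.minL)

/-- A vertex is *proper* if its label is the smallest among its descendants (including
itself), and *improper* otherwise; so the vertex `node a c l r` is improper iff
`min l.minL r.minL < a`.  `CBT.improperBlack B` says every improper vertex of `B` is black. -/
def CBT.improperBlack : CBT → Prop
  | .nil => True
  | .node a c l r =>
      (min l.minL r.minL < (a : ℕ∞) → c = true) ∧ l.improperBlack ∧ r.improperBlack

/-- `𝒟_n`: bicolored binary trees on `[n] = {1,…,n}` whose improper vertices are all black. -/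
def Dset (n : ℕ) : Set CBT :=
  {B | B.labels = (Finset.Icc 1 n).val ∧ B.improperBlack}

/-- `CBT.leftImp B` says every improper vertex of `B` is *left improper*, i.e. the
smallest label in its left subtree is smaller than the smallest label in its right
subtree. -/
def CBT.leftImp : CBT → Prop
  | .nil => True
  | .node a _ l r =>
      (min l.minL r.minL < (a : ℕ∞) → l.minL < r.minL) ∧ l.leftImp ∧ r.leftImp

/-- `ℰ_n`: bicolored binary trees on `[n]` whose improper vertices are all left improper. -/
def Eset (n : ℕ) : Set CBT :=
  {B | B.labels = (Finset.Icc 1 n).val ∧ B.leftImp}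

/-- The flip map `f`: it performs the flip `f_v` (swap the two subtrees of `v` and change
the color of `v`) simultaneously at every *right improper* vertex `v`, i.e. at every
vertex with `m(R) < m(L)` and `m(R) < label`. -/
noncomputable def CBT.flip : CBT → CBT
  | .nil => .nil
  | .node a c l r =>
      if r.minL < l.minL ∧ r.minL < (a : ℕ∞) then .node a (!c) r.flip l.flip
      else .node a c l.flip r.flip

/-!
Flipping a right improper vertex makes it left improper and white.  Since labels are distinct, a vertex that is improper but not right
improper is left improper, so `f` lands in `ℰ_n`.  In a tree of `𝒟_n` every improper vertex
is black, so in its image the flipped vertices are exactly the improper white ones; hence `f`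
is inverted by flipping back at every improper white vertex.  Flips preserve the minimum
label of every subtree, so "improper" means the same before and after.
-/

namespace CBT

noncomputable def unflip : CBT → CBT
  | .nil => .nil
  | .node a c l r =>
      if min l.minL r.minL < (a : ℕ∞) ∧ c = false then .node a true r.unflip l.unflip
      else .node a c l.unflip r.unflip

lemma labels_flip (B : CBT) : B.flip.labels = B.labels := by
  induction B with
  | nil => rfl
  | node a c l r ihl ihr =>
    rw [flip]
    split <;> simp only [labels, ihl, ihr, add_comm]

lemma minL_flip (B : CBT) : B.flip.minL = B.minL := by
  induction B with
  | nil => rfl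
  | node a c l r ihl ihr =>
    rw [flip]
    split <;> simp only [minL, ihl, ihr, min_comm l.minL r.minL]

lemma labels_unflip (B : CBT) : B.unflip.labels = B.labels := by
  induction B with
  | nil => rfl
  | node a c l r ihl ihr =>
    rw [unflip]
    split <;> simp only [labels, ihl, ihr, add_comm]

lemma minL_unflip (B : CBT) : B.unflip.minL = B.minL := by
  induction B with
  | nil => rfl
  | node a c l r ihl ihr =>
    rw [unflip]
    split <;> simp only [minL, ihl, ihr, min_comm l.minL r.minL]

lemma exists_mem_labels_eq_minL {B : CBT} (h : B.minL ≠ ⊤) :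
    ∃ k ∈ B.labels, (k : ℕ∞) = B.minL := by
  induction B with
  | nil => exact absurd rfl h
  | node a c l r ihl ihr =>
    rcases min_choice (a : ℕ∞) (min l.minL r.minL) with ha | hlr
    · exact ⟨a, Multiset.mem_cons_self _ _, by rw [minL, ha]⟩
    rw [minL, hlr] at h ⊢
    rcases min_choice l.minL r.minL with hl | hr
    · rw [hl] at h ⊢
      obtain ⟨k, hk, hkl⟩ := ihl h
      exact ⟨k, by simp [labels, hk], hkl⟩
    · rw [hr] at h ⊢
      obtain ⟨k, hk, hkr⟩ := ihr h
      exact ⟨k, by simp [labels, hk], hkr⟩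

lemma minL_ne_minL_of_disjoint {l r : CBT} (hd : Disjoint l.labels r.labels)
    (hl : l.minL ≠ ⊤) : l.minL ≠ r.minL := by
  intro hlr
  obtain ⟨k, hkl, hk⟩ := exists_mem_labels_eq_minL hl
  obtain ⟨k', hkr, hk'⟩ := exists_mem_labels_eq_minL (hlr ▸ hl)
  obtain rfl : k = k' := by exact_mod_cast hk.trans (hlr.trans hk'.symm)
  exact Multiset.disjoint_left.mp hd hkl hkr

lemma minL_lt_minL_of_min_lt_of_not_lt {l r : CBT} {a : ℕ∞} (hd : Disjoint l.labels r.labels)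
    (him : min l.minL r.minL < a) (hnr : ¬(r.minL < l.minL ∧ r.minL < a)) :
    l.minL < r.minL := by
  rcases lt_trichotomy l.minL r.minL with h | h | h
  · exact h
  · refine absurd h (minL_ne_minL_of_disjoint hd fun htop => ?_)
    rw [← h, htop, min_self] at him
    exact not_top_lt him
  · exact absurd ⟨h, by rwa [min_eq_right h.le] at him⟩ hnr

lemma leftImp_flip {B : CBT} (hnd : B.labels.Nodup) : B.flip.leftImp := by
  induction B with
  | nil => trivial
  | node a c l r ihl ihr =>
    rw [labels, Multiset.nodup_cons, Multiset.nodup_add] at hnd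
    obtain ⟨-, hl, hr, hd⟩ := hnd
    rw [flip]
    split
    · next hflip =>
      exact ⟨fun _ => by simpa only [minL_flip] using hflip.1, ihr hr, ihl hl⟩
    · next hflip =>
      refine ⟨fun him => ?_, ihl hl, ihr hr⟩
      rw [minL_flip, minL_flip] at him ⊢
      exact minL_lt_minL_of_min_lt_of_not_lt hd him hflip

lemma improperBlack_unflip (B : CBT) : B.unflip.improperBlack := by
  induction B with
  | nil => trivial
  | node a c l r ihl ihr =>
    rw [unflip]
    split
    · exact ⟨fun _ => rfl, ihr, ihl⟩
    · next hunflip =>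
      refine ⟨fun him => ?_, ihl, ihr⟩
      rw [minL_unflip, minL_unflip] at him
      simpa using fun hc => hunflip ⟨him, hc⟩

lemma unflip_flip {B : CBT} (hib : B.improperBlack) : B.flip.unflip = B := by
  induction B with
  | nil => rfl
  | node a c l r ihl ihr =>
    obtain ⟨hc, hlb, hrb⟩ := hib
    rw [flip]
    split
    · next hflip =>
      have him : min l.minL r.minL < a := by rw [min_eq_right hflip.1.le]; exact hflip.2
      rw [unflip, if_pos, ihl hlb, ihr hrb, hc him]
      · rw [minL_flip, minL_flip, min_comm, hc him]
        exact ⟨him, rfl⟩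
    · next hflip =>
      rw [unflip, if_neg, ihl hlb, ihr hrb]
      rintro ⟨him, hwhite⟩
      rw [minL_flip, minL_flip] at him
      simp [hc him] at hwhite

lemma flip_unflip {B : CBT} (hli : B.leftImp) : B.unflip.flip = B := by
  induction B with
  | nil => rfl
  | node a c l r ihl ihr =>
    obtain ⟨hc, hll, hrl⟩ := hli
    rw [unflip]
    split
    · next hunflip =>
      have hlr : l.minL < r.minL := hc hunflip.1
      rw [flip, if_pos, ihl hll, ihr hrl, hunflip.2, Bool.not_true]
      rw [minL_unflip, minL_unflip]
      exact ⟨hlr, by rw [min_eq_left hlr.le] at hunflip; exact hunflip.1⟩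
    · next hunflip =>
      rw [flip, if_neg, ihl hll, ihr hrl]
      rintro ⟨hrl', hra⟩
      rw [minL_unflip, minL_unflip] at hrl'
      rw [minL_unflip] at hra
      exact hrl'.not_gt (hc (by rwa [min_eq_right hrl'.le]))

end CBT

lemma mapsTo_flip_Dset_Eset (n : ℕ) : Set.MapsTo CBT.flip (Dset n) (Eset n) :=
  fun B ⟨hlab, _⟩ =>
    ⟨B.labels_flip.trans hlab, CBT.leftImp_flip (hlab ▸ (Finset.Icc 1 n).nodup)⟩

lemma mapsTo_unflip_Eset_Dset (n : ℕ) : Set.MapsTo CBT.unflip (Eset n) (Dset n) :=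
  fun B ⟨hlab, _⟩ => ⟨B.labels_unflip.trans hlab, B.improperBlack_unflip⟩

lemma invOn_unflip_flip (n : ℕ) : Set.InvOn CBT.unflip CBT.flip (Dset n) (Eset n) :=
  ⟨fun _ hB => CBT.unflip_flip hB.2, fun _ hB => CBT.flip_unflip hB.2⟩

theorem flip_bijOn_general (n : ℕ) :
    Set.BijOn CBT.flip (Dset n) (Eset n) :=
  (invOn_unflip_flip n).bijOn (mapsTo_flip_Dset_Eset n) (mapsTo_unflip_Eset_Dset n)

/-- The flip map `f` is a bijection from `𝒟_n` onto `ℰ_n`. -/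
theorem flip_bijOn (n : ℕ) (hn : 0 < n) :
    Set.BijOn CBT.flip (Dset n) (Eset n) :=
  flip_bijOn_general n
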